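/- Let F be a field of characteristic p > 0 and λ a partition of n with at least 3 parts. Let d = dim_F M^λ. Then for every integer a with 1 < a ≤ d − 2, the exterior power Λ^a M^λ is a decomposable FS_n-module. -/

import Mathlib

set_option linter.unusedSectionVars false
set_option linter.unusedVariables false
set_option maxHeartbeats 2000000


open ExteriorAlgebra

section WedgeAux

variable {F : Type*} [Field F] {ι : Type*} [Fintype ι] [LinearOrder ι] [Nonempty ι]

/-- Enumeration of a finset in increasing order, with junk values out of range. -/
noncomputable def enumOf (S : Finset ι) (i : ℕ) : Fin i → ι :=
  fun k => (S.sort (· ≤ ·)).getD k (Classical.arbitrary ι)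

lemma enumOf_mem {S : Finset ι} {a : ℕ} (hS : S.card = a) (k : Fin a) :
    enumOf S a k ∈ S := by
  have hk : (k : ℕ) < (S.sort (· ≤ ·)).length := by
    rw [Finset.length_sort, hS]; exact k.isLt
  rw [enumOf, List.getD_eq_getElem _ _ hk]
  exact (Finset.mem_sort _).1 (List.getElem_mem hk)

lemma enumOf_injective {S : Finset ι} {a : ℕ} (hS : S.card = a) :
    Function.Injective (enumOf S a) := by
  intro j k h
  have hj : (j : ℕ) < (S.sort (· ≤ ·)).length := by
    rw [Finset.length_sort, hS]; exact j.isLt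
  have hk : (k : ℕ) < (S.sort (· ≤ ·)).length := by
    rw [Finset.length_sort, hS]; exact k.isLt
  simp only [enumOf] at h
  rw [List.getD_eq_getElem _ _ hj, List.getD_eq_getElem _ _ hk] at h
  exact Fin.ext ((List.Nodup.getElem_inj_iff (Finset.sort_nodup _ _)).1 h)

lemma enumOf_image {S : Finset ι} {a : ℕ} (hS : S.card = a) :
    Finset.image (enumOf S a) Finset.univ = S := by
  apply Finset.eq_of_subset_of_card_le
  · intro x hx
    obtain ⟨k, _, rfl⟩ := Finset.mem_image.1 hx
    exact enumOf_mem hS k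
  · rw [Finset.card_image_of_injective _ (enumOf_injective hS), Finset.card_univ,
      Fintype.card_fin, hS]

variable (F) in
/-- The wedge of the standard basis vectors indexed by a finset. -/
noncomputable def wedgeOf (a : ℕ) (S : Finset ι) : ExteriorAlgebra F (ι →₀ F) :=
  ιMulti F a fun k => Finsupp.single (enumOf S a k) 1

lemma wedgeOf_mem (a : ℕ) (S : Finset ι) : wedgeOf F a S ∈ ⋀[F]^a (ι →₀ F) :=
  ιMulti_range F a (Set.mem_range_self _)

variable (F) in
/-- Dual functional picking out the coefficient of `wedgeOf F a S`. -/
noncomputable def dualW (a : ℕ) (S : Finset ι) : ExteriorAlgebra F (ι →₀ F) →ₗ[F] F :=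
  liftAlternating fun i =>
    (Matrix.detRowAlternating).compLinearMap
      (LinearMap.pi fun k : Fin i => Finsupp.lapply (enumOf S i k))

lemma dualW_apply (a : ℕ) (S : Finset ι) (v : Fin a → (ι →₀ F)) :
    dualW F a S (ιMulti F a v) = Matrix.det (Matrix.of fun j k => v j (enumOf S a k)) := by
  rw [dualW, liftAlternating_apply_ιMulti]
  rfl

lemma dualW_wedge_self {a : ℕ} {S : Finset ι} (hS : S.card = a) :
    dualW F a S (wedgeOf F a S) = 1 := by
  rw [wedgeOf, dualW_apply]
  have h : (Matrix.of fun j k => (Finsupp.single (enumOf S a j) (1 : F)) (enumOf S a k))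
      = (1 : Matrix (Fin a) (Fin a) F) := by
    ext j k
    simp only [Matrix.of_apply, Finsupp.single_apply, Matrix.one_apply,
      (enumOf_injective hS).eq_iff]
  rw [h, Matrix.det_one]

lemma dualW_wedge_ne {a : ℕ} {S T : Finset ι} (hS : S.card = a) (hT : T.card = a)
    (hST : S ≠ T) : dualW F a S (wedgeOf F a T) = 0 := by
  rw [wedgeOf, dualW_apply]
  obtain ⟨s, hsS, hsT⟩ : ∃ s, s ∈ S ∧ s ∉ T := by
    by_contra hcon
    push_neg at hcon
    exact hST (Finset.eq_of_subset_of_card_le hcon (by rw [hS, hT]))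
  obtain ⟨k₀, _, hk₀⟩ := Finset.mem_image.1 ((enumOf_image hS).symm ▸ hsS)
  apply Matrix.det_eq_zero_of_column_eq_zero k₀
  intro j
  have : enumOf T a j ≠ s := fun h => hsT (h ▸ enumOf_mem hT j)
  simp [Finsupp.single_apply, hk₀, this]

lemma wedgeOf_linearIndependent (a : ℕ) :
    LinearIndependent F (fun S : {s : Finset ι // s.card = a} => wedgeOf F a S.1) := by
  rw [linearIndependent_iff']
  intro s g hsum i hi
  have h := congrArg (dualW F a i.1) hsum
  rw [map_sum, map_zero] at h
  have h2 : ∀ j ∈ s, dualW F a i.1 (g j • wedgeOf F a j.1) = if j = i then g i else 0 := by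
    intro j _
    rw [map_smul]
    by_cases hji : j = i
    · subst hji; rw [dualW_wedge_self j.2, if_pos rfl, smul_eq_mul, mul_one]
    · rw [dualW_wedge_ne i.2 j.2 (fun hh => hji (Subtype.ext hh.symm)), if_neg hji,
        smul_eq_mul, mul_zero]
  rw [Finset.sum_congr rfl h2, Finset.sum_ite_eq' s i (fun _ => g i), if_pos hi] at h
  exact h

lemma exists_perm_factor {a : ℕ} {α : Type*} {f g : Fin a → α}
    (hf : Function.Injective f) (hg : Function.Injective g)
    (h : Set.range f = Set.range g) : ∃ σ : Equiv.Perm (Fin a), g = f ∘ σ := by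
  refine ⟨(Equiv.ofInjective g hg).trans ((Equiv.setCongr h.symm).trans
    (Equiv.ofInjective f hf).symm), ?_⟩
  funext x
  show g x = f (((Equiv.ofInjective f hf).symm)
    ((Equiv.setCongr h.symm) ((Equiv.ofInjective g hg) x)))
  rw [Equiv.apply_ofInjective_symm hf]
  rfl

lemma ιMulti_single_eq_smul_wedgeOf {a : ℕ} (r : Fin a → ι) (hr : Function.Injective r) :
    ∃ σ : Equiv.Perm (Fin a),
      ιMulti F a (fun k => Finsupp.single (r k) (1 : F)) =
        Equiv.Perm.sign σ • wedgeOf F a (Finset.image r Finset.univ) := by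
  set T := Finset.image r Finset.univ with hTdef
  have hT : T.card = a := by
    rw [hTdef, Finset.card_image_of_injective _ hr, Finset.card_univ, Fintype.card_fin]
  have hrange : Set.range (enumOf T a) = Set.range r := by
    have h1 : ↑(Finset.image (enumOf T a) Finset.univ) = (Set.range (enumOf T a)) := by
      rw [Finset.coe_image, Finset.coe_univ, Set.image_univ]
    have h2 : ↑(Finset.image r Finset.univ) = (Set.range r) := by
      rw [Finset.coe_image, Finset.coe_univ, Set.image_univ]
    rw [← h1, ← h2, enumOf_image hT]
  obtain ⟨σ, hσ⟩ := exists_perm_factor (enumOf_injective hT) hr hrange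
  refine ⟨σ, ?_⟩
  have hcomp : (fun k => Finsupp.single (r k) (1 : F)) =
      (fun k => Finsupp.single (enumOf T a k) (1 : F)) ∘ σ := by
    funext k
    simp only [Function.comp_apply]
    rw [congrFun hσ k]
    rfl
  rw [hcomp]
  exact AlternatingMap.map_perm _ _ _

lemma wedgeOf_span (a : ℕ) :
    Submodule.span F (Set.range fun S : {s : Finset ι // s.card = a} => wedgeOf F a S.1)
      = ⋀[F]^a (ι →₀ F) := by
  refine le_antisymm (Submodule.span_le.2 ?_) ?_
  · rintro _ ⟨S, rfl⟩
    exact wedgeOf_mem a S.1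
  · rw [← ιMulti_span_fixedDegree]
    refine Submodule.span_le.2 ?_
    rintro _ ⟨v, rfl⟩
    have hv : v = fun j => ∑ t ∈ (v j).support, (v j t) • Finsupp.single t (1 : F) := by
      funext j
      conv_lhs => rw [← Finsupp.sum_single (v j)]
      rw [Finsupp.sum]
      refine Finset.sum_congr rfl fun t _ => ?_
      rw [Finsupp.smul_single, smul_eq_mul, mul_one]
    have expand : ιMulti F a v = ∑ r ∈ Fintype.piFinset (fun j => (v j).support),
        (∏ j, v j (r j)) • ιMulti F a (fun j => Finsupp.single (r j) (1 : F)) := by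
      conv_lhs => rw [hv]
      have h1 := (ιMulti F a (M := ι →₀ F)).toMultilinearMap.map_sum_finset
        (g := fun j t => (v j t) • Finsupp.single t (1 : F)) (A := fun j => (v j).support)
      rw [show ((ιMulti F a (M := ι →₀ F)).toMultilinearMap : (Fin a → ι →₀ F) → _)
        = ιMulti F a from rfl] at h1
      rw [h1]
      refine Finset.sum_congr rfl fun r _ => ?_
      have h2 := (ιMulti F a (M := ι →₀ F)).toMultilinearMap.map_smul_univ
        (fun j => v j (r j)) (fun j => Finsupp.single (r j) (1 : F))
      exact h2
    rw [expand]
    refine Submodule.sum_mem _ fun r _ => Submodule.smul_mem _ _ ?_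
    by_cases hr : Function.Injective r
    · obtain ⟨σ, hσ⟩ := ιMulti_single_eq_smul_wedgeOf (F := F) r hr
      rw [hσ]
      have hT : (Finset.image r Finset.univ).card = a := by
        rw [Finset.card_image_of_injective _ hr, Finset.card_univ, Fintype.card_fin]
      have hmem : wedgeOf F a (Finset.image r Finset.univ) ∈
          Submodule.span F (Set.range fun S : {s : Finset ι // s.card = a} => wedgeOf F a S.1) :=
        Submodule.subset_span ⟨⟨_, hT⟩, rfl⟩
      rcases Int.units_eq_one_or (Equiv.Perm.sign σ) with h | h
      · rw [h, one_smul]; exact hmem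
      · rw [h, Units.neg_smul, one_smul]; exact Submodule.neg_mem _ hmem
    · obtain ⟨i, j, hij, hne⟩ := Function.not_injective_iff.1 hr
      rw [AlternatingMap.map_eq_zero_of_eq _ _ (by rw [hij]) hne]
      exact Submodule.zero_mem _

end WedgeAux


/-- If the pairwise-agreement weight is not constant on pairs (witnessed by `u,v,w`),
then the total weight is not constant on `a`-subsets, for `2 ≤ a ≤ card ι - 2`. -/
lemma exists_ne_weight {ι : Type*} [Fintype ι] [DecidableEq ι]
    (agree : ι → ι → ℕ) (hsymm : ∀ x y, agree x y = agree y x)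
    (hdiag : ∀ x y, agree x x = agree y y)
    {u v w : ι} (huv : u ≠ v) (huw : u ≠ w) (hvw : v ≠ w)
    (hne : agree u v ≠ agree u w)
    {a : ℕ} (ha : 2 ≤ a) (had : a + 2 ≤ Fintype.card ι) :
    ∃ S T : Finset ι, S.card = a ∧ T.card = a ∧
      (∑ x ∈ S, ∑ y ∈ S, agree x y) ≠ (∑ x ∈ T, ∑ y ∈ T, agree x y) := by
  by_contra hcon
  push_neg at hcon
  set fwt : Finset ι → ℕ := fun S => ∑ x ∈ S, ∑ y ∈ S, agree x y with hfwt
  have hconst : ∀ S T : Finset ι, S.card = a → T.card = a → fwt S = fwt T := by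
    intro S T hS hT
    by_contra hc
    exact hc (hcon S T hS hT)
  have expand : ∀ (z : ι) (B : Finset ι), z ∉ B →
      fwt (insert z B) = agree z z + (∑ x ∈ B, (agree z x + agree x z)) + fwt B := by
    intro z B hz
    rw [hfwt]
    simp only [Finset.sum_insert hz]
    rw [Finset.sum_add_distrib, Finset.sum_add_distrib]
    ring
  set D : ι → ℤ := fun x =>
    ((agree v x + agree x v : ℕ) : ℤ) - ((agree w x + agree x w : ℕ) : ℤ) with hD
  have stepA : ∀ B : Finset ι, B.card = a - 1 → v ∉ B → w ∉ B → ∑ x ∈ B, D x = 0 := by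
    intro B hB hvB hwB
    have h1 : fwt (insert v B) = fwt (insert w B) := by
      apply hconst <;> rw [Finset.card_insert_of_notMem ‹_›, hB] <;> omega
    rw [expand v B hvB, expand w B hwB, hdiag v w] at h1
    have h2 : (∑ x ∈ B, (agree v x + agree x v)) = ∑ x ∈ B, (agree w x + agree x w) := by
      omega
    have h3 : ((∑ x ∈ B, (agree v x + agree x v) : ℕ) : ℤ)
        = ((∑ x ∈ B, (agree w x + agree x w) : ℕ) : ℤ) := by exact_mod_cast h2
    push_cast at h3
    rw [hD]
    rw [Finset.sum_sub_distrib]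
    push_cast
    omega
  have card3 : ∀ y : ι, y ≠ v → y ≠ w → ({v, w, y} : Finset ι).card = 3 := by
    intro y hyv hyw
    rw [Finset.card_insert_of_notMem (by simp [hvw, hyv.symm]),
      Finset.card_insert_of_notMem (by simp [hyw.symm]), Finset.card_singleton]
  have stepB : ∀ x y : ι, x ≠ y → x ≠ v → x ≠ w → y ≠ v → y ≠ w → D x = D y := by
    intro x y hxy hxv hxw hyv hyw
    obtain ⟨B₀, hxB₀, hB₀sub, hB₀card⟩ :
        ∃ B₀, {x} ⊆ B₀ ∧ B₀ ⊆ Finset.univ \ {v, w, y} ∧ B₀.card = a - 1 := by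
      have hsub : ({x} : Finset ι) ⊆ Finset.univ \ {v, w, y} := by
        simp [Finset.subset_iff, hxv, hxw, hxy]
      have hcard : a - 1 ≤ (Finset.univ \ ({v, w, y} : Finset ι)).card := by
        rw [Finset.card_sdiff_of_subset (Finset.subset_univ _), Finset.card_univ, card3 y hyv hyw]
        omega
      obtain ⟨B₀, h1, h2, h3⟩ := Finset.exists_subsuperset_card_eq hsub
        (by simp; omega) hcard
      exact ⟨B₀, h1, h2, h3⟩
    have hxmem : x ∈ B₀ := hxB₀ (Finset.mem_singleton_self x)
    have hnot : ∀ z ∈ B₀, z ≠ v ∧ z ≠ w ∧ z ≠ y := by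
      intro z hz
      have := hB₀sub hz
      simp only [Finset.mem_sdiff, Finset.mem_insert, Finset.mem_singleton] at this
      tauto
    have hvB₀ : v ∉ B₀ := fun h => ((hnot v h).1 rfl)
    have hwB₀ : w ∉ B₀ := fun h => ((hnot w h).2.1 rfl)
    have hyB₀ : y ∉ B₀ := fun h => ((hnot y h).2.2 rfl)
    set B₁ : Finset ι := insert y (B₀.erase x) with hB₁
    have hyB₁ : y ∉ B₀.erase x := fun h => hyB₀ (Finset.mem_of_mem_erase h)
    have hB₁card : B₁.card = a - 1 := by
      rw [hB₁, Finset.card_insert_of_notMem hyB₁, Finset.card_erase_of_mem hxmem, hB₀card]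
      omega
    have hvB₁ : v ∉ B₁ := by
      simp only [hB₁, Finset.mem_insert]
      rintro (h | h)
      · exact hyv h.symm
      · exact hvB₀ (Finset.mem_of_mem_erase h)
    have hwB₁ : w ∉ B₁ := by
      simp only [hB₁, Finset.mem_insert]
      rintro (h | h)
      · exact hyw h.symm
      · exact hwB₀ (Finset.mem_of_mem_erase h)
    have s0 := stepA B₀ hB₀card hvB₀ hwB₀
    have s1 := stepA B₁ hB₁card hvB₁ hwB₁
    rw [← Finset.add_sum_erase _ _ hxmem] at s0
    rw [hB₁, Finset.sum_insert hyB₁] at s1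
    omega
  have stepC : D u = 0 := by
    obtain ⟨B, huB, hBsub, hBcard⟩ :
        ∃ B, {u} ⊆ B ∧ B ⊆ Finset.univ \ {v, w} ∧ B.card = a - 1 := by
      have hsub : ({u} : Finset ι) ⊆ Finset.univ \ {v, w} := by
        simp [Finset.subset_iff, huv, huw]
      have hcard : a - 1 ≤ (Finset.univ \ ({v, w} : Finset ι)).card := by
        rw [Finset.card_sdiff_of_subset (Finset.subset_univ _), Finset.card_univ,
          Finset.card_insert_of_notMem (by simp [hvw]), Finset.card_singleton]
        omega
      obtain ⟨B, h1, h2, h3⟩ := Finset.exists_subsuperset_card_eq hsub (by simp; omega) hcard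
      exact ⟨B, h1, h2, h3⟩
    have humem : u ∈ B := huB (Finset.mem_singleton_self u)
    have hnot : ∀ z ∈ B, z ≠ v ∧ z ≠ w := by
      intro z hz
      have := hBsub hz
      simp only [Finset.mem_sdiff, Finset.mem_insert, Finset.mem_singleton] at this
      tauto
    have hvB : v ∉ B := fun h => ((hnot v h).1 rfl)
    have hwB : w ∉ B := fun h => ((hnot w h).2 rfl)
    have s := stepA B hBcard hvB hwB
    have hconstD : ∀ z ∈ B, D z = D u := by
      intro z hz
      by_cases hzu : z = u
      · rw [hzu]
      · exact stepB z u hzu (hnot z hz).1 (hnot z hz).2 huv huw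
    rw [Finset.sum_congr rfl hconstD, Finset.sum_const, hBcard] at s
    have : ((a - 1 : ℕ) : ℤ) * D u = 0 := by
      rw [← s, nsmul_eq_mul]
    rcases mul_eq_zero.1 this with h | h
    · exact absurd h (by exact_mod_cast Nat.one_le_iff_ne_zero.1 (by omega : 1 ≤ a - 1))
    · exact h
  simp only [hD, hsymm v u, hsymm w u] at stepC
  push_cast at stepC
  have : agree u v = agree u w := by omega
  exact hne this

/-- A `λ`-tabloid: a function `f : {1,…,n} → {rows}` whose fibre over the row `i` has
cardinality `λ_i`. -/
def Tabloid (n ℓ : ℕ) (lam : Fin ℓ → ℕ) : Type :=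
  {f : Fin n → Fin ℓ // ∀ i, (Finset.univ.filter (fun x => f x = i)).card = lam i}

/-- The symmetric group `S_n` acts on `λ`-tabloids by permuting entries. -/
noncomputable instance tabloidAction (n ℓ : ℕ) (lam : Fin ℓ → ℕ) :
    MulAction (Equiv.Perm (Fin n)) (Tabloid n ℓ lam) where
  smul g t := ⟨fun x => t.1 (g⁻¹ x), fun i => by
    rw [← t.2 i]
    refine Finset.card_bij' (fun x _ => g⁻¹ x) (fun x _ => g x) ?_ ?_ ?_ ?_ <;> simp⟩
  one_smul t := Subtype.ext <| funext fun x => congrArg t.1 (by simp)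
  mul_smul g h t := Subtype.ext <| funext fun x => congrArg t.1 (by simp [mul_inv_rev, Equiv.Perm.mul_apply])

/-- The representation of `G` on the exterior algebra of `M` induced by a
representation of `G` on `M`; it restricts to the diagonal action on each `⋀[F]^a M`. -/
noncomputable def extAlgRep {F G M : Type*} [Field F] [Group G] [AddCommGroup M] [Module F M]
    (ρ : Representation F G M) : Representation F G (ExteriorAlgebra F M) where
  toFun g := (ExteriorAlgebra.map (ρ g)).toLinearMap
  map_one' := by
    show (ExteriorAlgebra.map (ρ 1)).toLinearMap = _
    have h1 : ρ 1 = LinearMap.id := by rw [map_one]; rfl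
    rw [h1, ExteriorAlgebra.map_id]; rfl
  map_mul' g h := by
    show (ExteriorAlgebra.map (ρ (g * h))).toLinearMap = _
    have h1 : ρ (g * h) = (ρ g) ∘ₗ (ρ h) := by rw [map_mul]; rfl
    rw [h1, ← ExteriorAlgebra.map_comp_map]; rfl

/-- The permutation representation of `G` on `H →₀ k` induced by a `G`-action on `H`
(the old `Representation.ofMulAction`, whose carrier was `H →₀ k`). -/
noncomputable def ofMulActionFinsupp (k : Type*) [Semiring k] (G : Type*) [Monoid G] (H : Type*)
    [MulAction G H] : Representation k G (H →₀ k) where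
  toFun g := Finsupp.lmapDomain k k (g • ·)
  map_one' := by ext; simp
  map_mul' x y := by ext; simp [mul_smul]

set_option maxHeartbeats 1000000 in
/-- Abstract decomposition lemma: a `G`-invariant non-constant weight on `a`-subsets of a basis
permuted by `G` yields a decomposition of the `a`-th exterior power. -/
lemma decompose_abstract {F : Type*} [Field F] {G : Type*} [Group G] {ι : Type*}
    [Fintype ι] [LinearOrder ι] [Nonempty ι] [MulAction G ι]
    (fw : Finset ι → ℕ) (hfw : ∀ (g : G) (S : Finset ι), fw (S.image (g • ·)) = fw S)
    (a : ℕ) (S₁ S₂ : Finset ι) (hS₁ : S₁.card = a) (hS₂ : S₂.card = a)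
    (hne : fw S₁ ≠ fw S₂) :
    ∃ W₁ W₂ : Submodule F (ExteriorAlgebra F (ι →₀ F)),
      W₁ ≠ ⊥ ∧ W₂ ≠ ⊥ ∧ W₁ ⊓ W₂ = ⊥ ∧
      W₁ ⊔ W₂ = ⋀[F]^a (ι →₀ F) ∧
      (∀ (g : G), ∀ x ∈ W₁, extAlgRep (ofMulActionFinsupp F G ι) g x ∈ W₁) ∧
      (∀ (g : G), ∀ x ∈ W₂, extAlgRep (ofMulActionFinsupp F G ι) g x ∈ W₂) := by
  set ρ := ofMulActionFinsupp F G ι with hρ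
  set wfam : {s : Finset ι // s.card = a} → ExteriorAlgebra F (ι →₀ F) :=
    fun S => wedgeOf F a S.1 with hwfam
  set A : Set {s : Finset ι // s.card = a} := {S | fw S.1 = fw S₁} with hA
  have hli := wedgeOf_linearIndependent (F := F) (ι := ι) a
  have act_wedge : ∀ (g : G) (S : Finset ι), S.card = a →
      ∃ σ : Equiv.Perm (Fin a), extAlgRep ρ g (wedgeOf F a S) =
        Equiv.Perm.sign σ • wedgeOf F a (S.image (g • ·)) := by
    intro g S hS
    have h1 : extAlgRep ρ g (wedgeOf F a S) =
        ExteriorAlgebra.ιMulti F a (fun k => Finsupp.single (g • enumOf S a k) (1 : F)) := by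
      show ExteriorAlgebra.map (ρ g) (wedgeOf F a S) = _
      rw [wedgeOf, ExteriorAlgebra.map_apply_ιMulti]
      congr 1
      funext k
      show ρ g (Finsupp.single (enumOf S a k) 1) = _
      show Finsupp.lmapDomain F F (g • ·) (Finsupp.single (enumOf S a k) 1) = _
      rw [Finsupp.lmapDomain_apply, Finsupp.mapDomain_single]
    have hr : Function.Injective (fun k : Fin a => g • enumOf S a k) :=
      fun j k h => enumOf_injective hS (MulAction.injective g h)
    obtain ⟨σ, hσ⟩ := ιMulti_single_eq_smul_wedgeOf (F := F) _ hr
    have himg : Finset.image (fun k : Fin a => g • enumOf S a k) Finset.univ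
        = S.image (g • ·) := by
      conv_rhs => rw [← enumOf_image hS]
      rw [Finset.image_image]
      rfl
    exact ⟨σ, by rw [h1, hσ, himg]⟩
  have hinv : ∀ (E : Set {s : Finset ι // s.card = a}),
      (∀ (g : G) (S : {s : Finset ι // s.card = a}),
        S ∈ E → (⟨S.1.image (g • ·), by
          rw [Finset.card_image_of_injective _ (MulAction.injective g), S.2]⟩ :
          {s : Finset ι // s.card = a}) ∈ E) →
      ∀ (g : G), ∀ x ∈ Submodule.span F (wfam '' E),
        extAlgRep ρ g x ∈ Submodule.span F (wfam '' E) := by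
    intro E hE g x hx
    induction hx using Submodule.span_induction with
    | mem y hy =>
        obtain ⟨S, hSE, rfl⟩ := hy
        obtain ⟨σ, hσ⟩ := act_wedge g S.1 S.2
        rw [show wfam S = wedgeOf F a S.1 from rfl, hσ]
        have hmem' : wedgeOf F a (S.1.image (g • ·)) ∈ Submodule.span F (wfam '' E) :=
          Submodule.subset_span ⟨_, hE g S hSE, rfl⟩
        rcases Int.units_eq_one_or (Equiv.Perm.sign σ) with h | h
        · rw [h, one_smul]; exact hmem'
        · rw [h, Units.neg_smul, one_smul]; exact Submodule.neg_mem _ hmem'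
    | zero => rw [map_zero]; exact Submodule.zero_mem _
    | add y z hy hz ihy ihz => rw [map_add]; exact Submodule.add_mem _ ihy ihz
    | smul c y hy ihy => rw [map_smul]; exact Submodule.smul_mem _ _ ihy
  refine ⟨Submodule.span F (wfam '' A), Submodule.span F (wfam '' Aᶜ), ?_, ?_, ?_, ?_, ?_, ?_⟩
  · have hne0 : wedgeOf F a S₁ ≠ 0 := fun h =>
      one_ne_zero (α := F) (by rw [← dualW_wedge_self hS₁, h, map_zero])
    have hmem : wfam ⟨S₁, hS₁⟩ ∈ Submodule.span F (wfam '' A) :=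
      Submodule.subset_span ⟨⟨S₁, hS₁⟩, rfl, rfl⟩
    intro h
    rw [h, Submodule.mem_bot] at hmem
    exact hne0 hmem
  · have hne0 : wedgeOf F a S₂ ≠ 0 := fun h =>
      one_ne_zero (α := F) (by rw [← dualW_wedge_self hS₂, h, map_zero])
    have hmem : wfam ⟨S₂, hS₂⟩ ∈ Submodule.span F (wfam '' Aᶜ) :=
      Submodule.subset_span ⟨⟨S₂, hS₂⟩, fun h => hne (h : fw S₂ = fw S₁).symm, rfl⟩
    intro h
    rw [h, Submodule.mem_bot] at hmem
    exact hne0 hmem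
  · exact disjoint_iff.1 (hli.disjoint_span_image (disjoint_compl_right : Disjoint A Aᶜ))
  · rw [← Submodule.span_union, ← Set.image_union, Set.union_compl_self, Set.image_univ]
    exact wedgeOf_span a
  · exact hinv A (fun g S hS => by
      show fw (S.1.image (g • ·)) = fw S₁
      rw [hfw]
      exact hS)
  · exact hinv Aᶜ (fun g S hS => by
      intro hmem
      exact hS (by
        show fw S.1 = fw S₁
        rw [← hfw g S.1]
        exact hmem))

/-- Let `F` be a field of characteristic `p > 0` and `λ` a partition of `n`
with at least `3` parts, `d = dim M^λ`.  For every `a` with `1 < a ≤ d - 2`, the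
exterior power `Λ^a M^λ` of the Young permutation module is a decomposable
`FS_n`-module: it is the direct sum of two nonzero `S_n`-invariant submodules. -/
theorem statement5 {p : ℕ} [Fact p.Prime] {F : Type*} [Field F] [CharP F p]
    (n ℓ : ℕ) (lam : Fin ℓ → ℕ) (hℓ : 3 ≤ ℓ)
    (hpart : ∀ i j : Fin ℓ, i ≤ j → lam j ≤ lam i) (hpos : ∀ i, 0 < lam i)
    (hsum : ∑ i, lam i = n)
    (a : ℕ) (ha : 1 < a) (had : a + 2 ≤ Nat.card (Tabloid n ℓ lam)) :
    ∃ W₁ W₂ : Submodule F (ExteriorAlgebra F (Tabloid n ℓ lam →₀ F)),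
      W₁ ≠ ⊥ ∧ W₂ ≠ ⊥ ∧ W₁ ⊓ W₂ = ⊥ ∧
      W₁ ⊔ W₂ = ⋀[F]^a (Tabloid n ℓ lam →₀ F) ∧
      (∀ (g : Equiv.Perm (Fin n)), ∀ x ∈ W₁,
        extAlgRep (ofMulActionFinsupp F (Equiv.Perm (Fin n)) (Tabloid n ℓ lam)) g x ∈ W₁) ∧
      (∀ (g : Equiv.Perm (Fin n)), ∀ x ∈ W₂,
        extAlgRep (ofMulActionFinsupp F (Equiv.Perm (Fin n)) (Tabloid n ℓ lam)) g x ∈ W₂) := by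
  haveI hfin : Finite (Tabloid n ℓ lam) := by unfold Tabloid; infer_instance
  letI : Fintype (Tabloid n ℓ lam) := Fintype.ofFinite _
  letI : LinearOrder (Tabloid n ℓ lam) :=
    LinearOrder.lift' (Fintype.equivFin (Tabloid n ℓ lam)) (Equiv.injective _)
  have hd : a + 2 ≤ Fintype.card (Tabloid n ℓ lam) := by
    rwa [Nat.card_eq_fintype_card] at had
  haveI : Nonempty (Tabloid n ℓ lam) := Fintype.card_pos_iff.1 (by omega)
  set ρ := ofMulActionFinsupp F (Equiv.Perm (Fin n)) (Tabloid n ℓ lam) with hρ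
  -- the agreement weight
  set agr : Tabloid n ℓ lam → Tabloid n ℓ lam → ℕ :=
    fun t t' => (Finset.univ.filter fun x => t.1 x = t'.1 x).card with hagr
  have hcoe : ∀ (g : Equiv.Perm (Fin n)) (t : Tabloid n ℓ lam) (x : Fin n),
      (g • t).1 x = t.1 (g⁻¹ x) := fun _ _ _ => rfl
  have hsymm : ∀ t t', agr t t' = agr t' t := by
    intro t t'
    simp only [hagr]
    congr 1
    apply Finset.filter_congr
    intro x _
    exact ⟨Eq.symm, Eq.symm⟩
  have hdiag : ∀ t t', agr t t = agr t' t' := by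
    intro t t'
    simp [hagr]
  have hsmul : ∀ (g : Equiv.Perm (Fin n)) (t t' : Tabloid n ℓ lam),
      agr (g • t) (g • t') = agr t t' := by
    intro g t t'
    rw [hagr]
    refine Finset.card_bij' (fun x _ => g⁻¹ x) (fun x _ => g x) ?_ ?_ ?_ ?_ <;>
      simp [hcoe]
  set fwt : Finset (Tabloid n ℓ lam) → ℕ := fun S => ∑ x ∈ S, ∑ y ∈ S, agr x y with hfwt
  have hfwt_smul : ∀ (g : Equiv.Perm (Fin n)) (S : Finset (Tabloid n ℓ lam)),
      fwt (S.image (g • ·)) = fwt S := by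
    intro g S
    simp only [hfwt]
    rw [Finset.sum_image (fun x _ y _ h => MulAction.injective g h)]
    refine Finset.sum_congr rfl fun x _ => ?_
    rw [Finset.sum_image (fun x _ y _ h => MulAction.injective g h)]
    exact Finset.sum_congr rfl fun y _ => hsmul g x y
  -- three tabloids with non-constant pairwise agreement
  have hn3 : 3 ≤ n := by
    have h1 : ∑ _i : Fin ℓ, 1 ≤ ∑ i, lam i := Finset.sum_le_sum fun i _ => hpos i
    simp only [Finset.sum_const, Finset.card_univ, Fintype.card_fin, smul_eq_mul,
      mul_one] at h1
    omega
  obtain ⟨t₀⟩ := ‹Nonempty (Tabloid n ℓ lam)›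
  set r0 : Fin ℓ := ⟨0, by omega⟩ with hr0def
  set r1 : Fin ℓ := ⟨1, by omega⟩ with hr1def
  set r2 : Fin ℓ := ⟨2, by omega⟩ with hr2def
  have hr01 : r0 ≠ r1 := Fin.ne_of_val_ne (by norm_num)
  have hr02 : r0 ≠ r2 := Fin.ne_of_val_ne (by norm_num)
  have hr12 : r1 ≠ r2 := Fin.ne_of_val_ne (by norm_num)
  have hfib : ∀ r : Fin ℓ, ∃ x : Fin n, t₀.1 x = r := by
    intro r
    have h1 : 0 < (Finset.univ.filter fun x => t₀.1 x = r).card := by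
      rw [t₀.2 r]; exact hpos r
    obtain ⟨x, hx⟩ := Finset.card_pos.1 h1
    exact ⟨x, (Finset.mem_filter.1 hx).2⟩
  obtain ⟨x₀, hx₀⟩ := hfib r0
  obtain ⟨x₁, hx₁⟩ := hfib r1
  obtain ⟨x₂, hx₂⟩ := hfib r2
  have hx01 : x₀ ≠ x₁ := fun h => hr01 (by rw [← hx₀, h, hx₁])
  have hx02 : x₀ ≠ x₂ := fun h => hr02 (by rw [← hx₀, h, hx₂])
  have hx12 : x₁ ≠ x₂ := fun h => hr12 (by rw [← hx₁, h, hx₂])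
  set u : Tabloid n ℓ lam := (Equiv.swap x₀ x₁) • t₀ with hudef
  set w : Tabloid n ℓ lam := (Equiv.swap x₁ x₂) • t₀ with hwdef
  have hu : ∀ x, u.1 x = t₀.1 (Equiv.swap x₀ x₁ x) := by
    intro x
    rw [hudef, hcoe, Equiv.swap_inv]
  have hw : ∀ x, w.1 x = t₀.1 (Equiv.swap x₁ x₂ x) := by
    intro x
    rw [hwdef, hcoe, Equiv.swap_inv]
  have hfilter1 : (Finset.univ.filter fun x => u.1 x = t₀.1 x)
      = Finset.univ \ {x₀, x₁} := by
    ext x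
    simp only [Finset.mem_filter, Finset.mem_univ, true_and, Finset.mem_sdiff,
      Finset.mem_insert, Finset.mem_singleton, not_or]
    rw [hu x]
    by_cases h0 : x = x₀
    · subst h0
      rw [Equiv.swap_apply_left, hx₁, hx₀]
      simp [hr01.symm]
    · by_cases h1 : x = x₁
      · subst h1
        rw [Equiv.swap_apply_right, hx₀, hx₁]
        simp [hr01, h0]
      · rw [Equiv.swap_apply_of_ne_of_ne h0 h1]
        simp [h0, h1]
  have hfilter2 : (Finset.univ.filter fun x => u.1 x = w.1 x)
      = Finset.univ \ {x₀, x₁, x₂} := by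
    ext x
    simp only [Finset.mem_filter, Finset.mem_univ, true_and, Finset.mem_sdiff,
      Finset.mem_insert, Finset.mem_singleton, not_or]
    rw [hu x, hw x]
    by_cases h0 : x = x₀
    · subst h0
      rw [Equiv.swap_apply_left, Equiv.swap_apply_of_ne_of_ne hx01 hx02, hx₁, hx₀]
      simp [hr01.symm]
    · by_cases h1 : x = x₁
      · subst h1
        rw [Equiv.swap_apply_right, Equiv.swap_apply_left, hx₀, hx₂]
        simp [hr02, h0]
      · by_cases h2 : x = x₂
        · subst h2
          rw [Equiv.swap_apply_of_ne_of_ne h0 h1, Equiv.swap_apply_right, hx₂, hx₁]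
          simp [hr12.symm, h0, h1]
        · rw [Equiv.swap_apply_of_ne_of_ne h0 h1, Equiv.swap_apply_of_ne_of_ne h1 h2]
          simp [h0, h1, h2]
  have hagr1 : agr u t₀ = n - 2 := by
    rw [hagr]
    simp only []
    rw [hfilter1, Finset.card_sdiff_of_subset (Finset.subset_univ _), Finset.card_univ,
      Fintype.card_fin, Finset.card_insert_of_notMem (by simp [hx01]),
      Finset.card_singleton]
  have hagr2 : agr u w = n - 3 := by
    rw [hagr]
    simp only []
    rw [hfilter2, Finset.card_sdiff_of_subset (Finset.subset_univ _), Finset.card_univ,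
      Fintype.card_fin, Finset.card_insert_of_notMem (by simp [hx01, hx02]),
      Finset.card_insert_of_notMem (by simp [hx12]), Finset.card_singleton]
  have hut : u ≠ t₀ := by
    intro h
    have h2 : u.1 x₀ = t₀.1 x₀ := by rw [h]
    rw [hu, Equiv.swap_apply_left, hx₁, hx₀] at h2
    exact hr01 h2.symm
  have huw : u ≠ w := by
    intro h
    have h2 : u.1 x₀ = w.1 x₀ := by rw [h]
    rw [hu, hw, Equiv.swap_apply_left, Equiv.swap_apply_of_ne_of_ne hx01 hx02, hx₁, hx₀] at h2
    exact hr01 h2.symm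
  have htw : t₀ ≠ w := by
    intro h
    have h2 : t₀.1 x₁ = w.1 x₁ := by rw [h]
    rw [hw, Equiv.swap_apply_left, hx₁, hx₂] at h2
    exact hr12 h2
  have hneagr : agr u t₀ ≠ agr u w := by
    rw [hagr1, hagr2]
    omega
  obtain ⟨S₁, S₂, hS₁, hS₂, hSne⟩ :=
    exists_ne_weight agr hsymm hdiag hut huw htw hneagr (by omega) hd
  exact decompose_abstract fwt hfwt_smul a S₁ S₂ hS₁ hS₂ hSne
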